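/- arXiv:2407.15393 — 3 statements merged into one kernel-verified Lean document; each statement's English description precedes it below -/
import Mathlib

section
/- Let D be a family of d-variate quasi-copulas with the property that for every d-variate quasi-copula Q and every two points x, z ∈ [0,1]^d there exists D_{x,z} ∈ D with D_{x,z}(x) = Q(x) and D_{x,z}(z) = Q(z). Then for every quasi-copula Q and every u ∈ [0,1]^d, Q(u) = inf over z of (sup over x of D_{x,z}(u)) and Q(u) = sup over z of (inf over x of D_{x,z}(u)). -/
/-!
Taking `x = u` gives `D_{u,z}(u) = Q(u)` for every `z`, and taking `z = u` gives
`D_{x,u}(u) = Q(u)` for every `x`. So the function `(x, z) ↦ D_{x,z}(u)` is constant, equal to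
`Q(u)`, on the cross through `(u, u)`, and for any such function the inf over `z` of the sup
over `x` (and the sup of the inf) is that constant. The only analytic input is boundedness,
which makes the real `⨆`/`⨅` meaningful: quasi-copulas are 1-Lipschitz for the `ℓ¹` distance,
so they vary by at most `d` on the unit cube.
-/

/-- A `d`-variate quasi-copula. -/
def IsQuasiCopula (d : ℕ) (Q : (Fin d → ℝ) → ℝ) : Prop :=
  (∀ j : Fin d, ∀ u ∈ Set.Icc (0:ℝ) 1,
      Q (Function.update (fun _ => (1:ℝ)) j u) = u) ∧
  (∀ j : Fin d, ∀ x : Fin d → ℝ, (∀ i, x i ∈ Set.Icc (0:ℝ) 1) →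
      ∀ a b : ℝ, a ∈ Set.Icc (0:ℝ) 1 → b ∈ Set.Icc (0:ℝ) 1 → a ≤ b →
        Q (Function.update x j a) ≤ Q (Function.update x j b)) ∧
  (∀ j : Fin d, ∀ x : Fin d → ℝ, (∀ i, x i ∈ Set.Icc (0:ℝ) 1) →
      ∀ a b : ℝ, a ∈ Set.Icc (0:ℝ) 1 → b ∈ Set.Icc (0:ℝ) 1 →
        |Q (Function.update x j a) - Q (Function.update x j b)| ≤ |a - b|)

open Function

section CrossConstant

variable {ι α : Type*} [ConditionallyCompleteLattice α]

theorem ciInf_ciSup_eq_of_const_on_cross (f : ι → ι → α) (i₀ : ι) (c : α)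
    (hrow : ∀ z, f i₀ z = c) (hcol : ∀ x, f x i₀ = c)
    (hbdd : ∀ z, BddAbove (Set.range fun x => f x z)) :
    ⨅ z, ⨆ x, f x z = c := by
  have : Nonempty ι := ⟨i₀⟩
  have hge : ∀ z, c ≤ ⨆ x, f x z := fun z => hrow z ▸ le_ciSup (hbdd z) i₀
  have hcol' : ⨆ x, f x i₀ = c := by simp only [hcol, ciSup_const]
  exact le_antisymm (hcol' ▸ ciInf_le ⟨c, by rintro _ ⟨z, rfl⟩; exact hge z⟩ i₀) (le_ciInf hge)

theorem ciSup_ciInf_eq_of_const_on_cross (f : ι → ι → α) (i₀ : ι) (c : α)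
    (hrow : ∀ z, f i₀ z = c) (hcol : ∀ x, f x i₀ = c)
    (hbdd : ∀ z, BddBelow (Set.range fun x => f x z)) :
    ⨆ z, ⨅ x, f x z = c :=
  ciInf_ciSup_eq_of_const_on_cross (α := αᵒᵈ) f i₀ c hrow hcol hbdd

end CrossConstant

namespace IsQuasiCopula

variable {d : ℕ} {Q : (Fin d → ℝ) → ℝ} {u v : Fin d → ℝ}

theorem abs_sub_le_sum (hQ : IsQuasiCopula d Q) (hu : ∀ i, u i ∈ Set.Icc (0:ℝ) 1)
    (hv : ∀ i, v i ∈ Set.Icc (0:ℝ) 1) :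
    |Q u - Q v| ≤ ∑ i, |u i - v i| := by
  suffices h : ∀ s : Finset (Fin d), |Q u - Q (s.piecewise v u)| ≤ ∑ i ∈ s, |u i - v i| by
    simpa using h Finset.univ
  intro s
  induction s using Finset.induction with
  | empty => simp
  | @insert j s hj ih =>
    set w := s.piecewise v u
    have hw : ∀ i, w i ∈ Set.Icc (0:ℝ) 1 := fun i => by
      by_cases h : i ∈ s <;> simp [w, h, hu i, hv i]
    have hwj : update w j (u j) = w := by
      rw [← Finset.piecewise_eq_of_notMem s v u hj, update_eq_self]
    have hstep := hQ.2.2 j w hw (u j) (v j) (hu j) (hv j)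
    rw [hwj, ← Finset.piecewise_insert] at hstep
    rw [Finset.sum_insert hj]
    calc |Q u - Q ((insert j s).piecewise v u)|
        ≤ |Q u - Q w| + |Q w - Q ((insert j s).piecewise v u)| := abs_sub_le _ _ _
      _ ≤ _ := by linarith

theorem abs_sub_le_dim (hQ : IsQuasiCopula d Q) (hu : ∀ i, u i ∈ Set.Icc (0:ℝ) 1)
    (hv : ∀ i, v i ∈ Set.Icc (0:ℝ) 1) :
    |Q u - Q v| ≤ d := by
  refine (hQ.abs_sub_le_sum hu hv).trans ?_
  calc ∑ i, |u i - v i| ≤ ∑ _i : Fin d, (1:ℝ) := by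
        gcongr with i
        exact abs_sub_le_iff.2 ⟨by linarith [(hu i).2, (hv i).1], by linarith [(hu i).1, (hv i).2]⟩
    _ = d := by simp

end IsQuasiCopula

theorem quasiCopula_inf_sup_of_two_point_family_general (d : ℕ)
    (D : Set ((Fin d → ℝ) → ℝ)) (hD : ∀ C ∈ D, IsQuasiCopula d C)
    (Q : (Fin d → ℝ) → ℝ)
    (Dsel : (Fin d → ℝ) → (Fin d → ℝ) → ((Fin d → ℝ) → ℝ))
    (hmem : ∀ x z : Fin d → ℝ, (∀ i, x i ∈ Set.Icc (0:ℝ) 1) →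
      (∀ i, z i ∈ Set.Icc (0:ℝ) 1) → Dsel x z ∈ D)
    (hagree : ∀ x z : Fin d → ℝ, (∀ i, x i ∈ Set.Icc (0:ℝ) 1) →
      (∀ i, z i ∈ Set.Icc (0:ℝ) 1) → Dsel x z x = Q x ∧ Dsel x z z = Q z) :
    ∀ u : Fin d → ℝ, (∀ i, u i ∈ Set.Icc (0:ℝ) 1) →
      (Q u = ⨅ z : {z : Fin d → ℝ // ∀ i, z i ∈ Set.Icc (0:ℝ) 1},
               ⨆ x : {x : Fin d → ℝ // ∀ i, x i ∈ Set.Icc (0:ℝ) 1}, Dsel x.1 z.1 u) ∧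
      (Q u = ⨆ z : {z : Fin d → ℝ // ∀ i, z i ∈ Set.Icc (0:ℝ) 1},
               ⨅ x : {x : Fin d → ℝ // ∀ i, x i ∈ Set.Icc (0:ℝ) 1}, Dsel x.1 z.1 u) := by
  intro u hu
  let f (x z : {x : Fin d → ℝ // ∀ i, x i ∈ Set.Icc (0:ℝ) 1}) : ℝ := Dsel x.1 z.1 u
  have hrow : ∀ z, f ⟨u, hu⟩ z = Q u := fun z => (hagree u z.1 hu z.2).1
  have hcol : ∀ x, f x ⟨u, hu⟩ = Q u := fun x => (hagree x.1 u x.2 hu).2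
  have hnear : ∀ x z, |f x z - Q z.1| ≤ d := fun x z => by
    simpa [f, (hagree x.1 z.1 x.2 z.2).2] using
      (hD _ (hmem x.1 z.1 x.2 z.2)).abs_sub_le_dim hu z.2
  refine ⟨(ciInf_ciSup_eq_of_const_on_cross f _ _ hrow hcol fun z => ?_).symm,
    (ciSup_ciInf_eq_of_const_on_cross f _ _ hrow hcol fun z => ?_).symm⟩
  · exact ⟨Q z.1 + d, by rintro _ ⟨x, rfl⟩; linarith [(abs_le.1 (hnear x z)).2]⟩
  · exact ⟨Q z.1 - d, by rintro _ ⟨x, rfl⟩; linarith [(abs_le.1 (hnear x z)).1]⟩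

/-- if a family `D` of quasi-copulas interpolates any quasi-copula at any
two points, then every quasi-copula is a pointwise inf of sups (and sup of infs) of the
interpolating members of `D`. -/
theorem quasiCopula_inf_sup_of_two_point_family (d : ℕ) (hd : 0 < d)
    (D : Set ((Fin d → ℝ) → ℝ)) (hD : ∀ C ∈ D, IsQuasiCopula d C)
    (Q : (Fin d → ℝ) → ℝ) (hQ : IsQuasiCopula d Q)
    (Dsel : (Fin d → ℝ) → (Fin d → ℝ) → ((Fin d → ℝ) → ℝ))
    (hmem : ∀ x z : Fin d → ℝ, (∀ i, x i ∈ Set.Icc (0:ℝ) 1) →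
      (∀ i, z i ∈ Set.Icc (0:ℝ) 1) → Dsel x z ∈ D)
    (hagree : ∀ x z : Fin d → ℝ, (∀ i, x i ∈ Set.Icc (0:ℝ) 1) →
      (∀ i, z i ∈ Set.Icc (0:ℝ) 1) → Dsel x z x = Q x ∧ Dsel x z z = Q z) :
    ∀ u : Fin d → ℝ, (∀ i, u i ∈ Set.Icc (0:ℝ) 1) →
      (Q u = ⨅ z : {z : Fin d → ℝ // ∀ i, z i ∈ Set.Icc (0:ℝ) 1},
               ⨆ x : {x : Fin d → ℝ // ∀ i, x i ∈ Set.Icc (0:ℝ) 1}, Dsel x.1 z.1 u) ∧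
      (Q u = ⨆ z : {z : Fin d → ℝ // ∀ i, z i ∈ Set.Icc (0:ℝ) 1},
               ⨅ x : {x : Fin d → ℝ // ∀ i, x i ∈ Set.Icc (0:ℝ) 1}, Dsel x.1 z.1 u) :=
  quasiCopula_inf_sup_of_two_point_family_general d D hD Q Dsel hmem hagree
end

section
/- Let C be a d-variate copula with induced probability measure μ, and for each k ∈ {1,...,d} let 0 = x_0^k < x_1^k < ... < x_m^k = 1 be a partition of [0,1]. For i = (i_1,...,i_d) ∈ {1,...,m}^d let R_i be the corresponding grid box and μ_i = μ(R_i), and define q_i^k = x_{i_k−1}^k + Σ{μ_j : j <_lex i, j_k = i_k}, where <_lex is the lexicographic order on d-tuples. Then for each k ∈ {1,...,d} and each fixed p ∈ {1,...,m}, the intervals J_i^k = [q_i^k, q_i^k + μ_i] over all i with i_k = p have pairwise disjoint interiors, their union is [x_{p−1}^k, x_p^k], and consequently the union over all i ∈ {1,...,m}^d of the intervals J_i^k equals [0,1]. -/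
/-!
Fix a coordinate `k`. Up to the `μ`-null set where some coordinate leaves `(0, 1]`, the boxes
`R_i` with `i k = p` partition the slab `x_p < u_k ≤ x_{p+1}`, so their masses add up to the
slab's marginal mass `x_{p+1} - x_p`. The `q_i^k` with `i k = p` are the left endpoints of
intervals of lengths `μ_i` laid end to end from `x_p` in lexicographic order, so these intervals
tile `[x_p, x_{p+1}]` without overlap, and the slabs in turn tile `[0, 1]`.
-/

open scoped Classical

def lexLt {d m : ℕ} (a b : Fin d → Fin m) : Prop :=
  ∃ k : Fin d, (∀ l : Fin d, l < k → a l = b l) ∧ a k < b k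

theorem lexLt_iff_toLex_lt {d m : ℕ} {a b : Fin d → Fin m} : lexLt a b ↔ toLex a < toLex b :=
  Iff.rfl

open Set MeasureTheory

section Packing

open Finset

variable {ι α β : Type*} [LinearOrder α] [AddCommMonoid β]

def sumBelow (e : ι → α) (f : ι → β) (s : Finset ι) (i : ι) : β :=
  ∑ j ∈ s with e j < e i, f j

variable {e : ι → α} {f : ι → β} {s : Finset ι}

theorem sumBelow_insert_of_forall_lt {a : ι} (hs : ∀ i ∈ s, e i < e a) :
    sumBelow e f (insert a s) a = ∑ i ∈ s, f i := by
  rw [sumBelow, filter_insert, if_neg (lt_irrefl _), filter_true_of_mem hs]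

theorem sumBelow_insert_of_lt {a i : ι} (hi : e i < e a) :
    sumBelow e f (insert a s) i = sumBelow e f s i := by
  rw [sumBelow, sumBelow, filter_insert, if_neg hi.not_gt]

variable [LinearOrder β] [IsOrderedAddMonoid β]

theorem sumBelow_add_le_sumBelow (hf : ∀ i, 0 ≤ f i) {i j : ι} (hi : i ∈ s)
    (hij : e i < e j) : sumBelow e f s i + f i ≤ sumBelow e f s j := by
  have hsub : insert i {l ∈ s | e l < e i} ⊆ {l ∈ s | e l < e j} :=
    insert_subset (mem_filter.2 ⟨hi, hij⟩) fun l hl ↦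
      mem_filter.2 ⟨(mem_filter.1 hl).1, (mem_filter.1 hl).2.trans hij⟩
  calc sumBelow e f s i + f i = ∑ l ∈ insert i {l ∈ s | e l < e i}, f l := by
        rw [sum_insert (by simp), add_comm, sumBelow]
    _ ≤ sumBelow e f s j := sum_le_sum_of_subset_of_nonneg hsub fun l _ _ ↦ hf l

theorem disjoint_Ioo_sumBelow (he : Function.Injective e) (hf : ∀ i, 0 ≤ f i) {i j : ι}
    (hi : i ∈ s) (hj : j ∈ s) (hij : i ≠ j) (c : β) :
    Disjoint (Ioo (c + sumBelow e f s i) (c + sumBelow e f s i + f i))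
      (Ioo (c + sumBelow e f s j) (c + sumBelow e f s j + f j)) := by
  have key : ∀ {i j}, i ∈ s → e i < e j →
      Disjoint (Ioo (c + sumBelow e f s i) (c + sumBelow e f s i + f i))
        (Ioo (c + sumBelow e f s j) (c + sumBelow e f s j + f j)) := fun hi h ↦
    (Set.Ioc_disjoint_Ioc_of_le <| by
      simpa only [add_assoc] using add_le_add (le_refl c) (sumBelow_add_le_sumBelow hf hi h)).mono
      Ioo_subset_Ioc_self Ioo_subset_Ioc_self
  rcases (he.ne hij).lt_or_gt with h | h
  · exact key hi h
  · exact (key hj h).symm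

theorem biUnion_Icc_sumBelow (he : Function.Injective e) (hf : ∀ i, 0 ≤ f i)
    (hs : s.Nonempty) (c : β) :
    ⋃ i ∈ s, Icc (c + sumBelow e f s i) (c + sumBelow e f s i + f i) =
      Icc c (c + ∑ i ∈ s, f i) := by
  induction s using induction_on_max_value e with
  | empty => exact absurd hs (by simp)
  | insert a s ha hmax ih =>
    have hlt : ∀ i ∈ s, e i < e a := fun i hi ↦
      (hmax i hi).lt_of_ne (he.ne (ne_of_mem_of_not_mem hi ha))
    rw [set_biUnion_insert, sumBelow_insert_of_forall_lt hlt, sum_insert ha]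
    rcases s.eq_empty_or_nonempty with rfl | hne
    · simp
    have hrest : ⋃ i ∈ s, Icc (c + sumBelow e f (insert a s) i)
          (c + sumBelow e f (insert a s) i + f i) =
        ⋃ i ∈ s, Icc (c + sumBelow e f s i) (c + sumBelow e f s i + f i) :=
      iUnion₂_congr fun i hi ↦ by rw [sumBelow_insert_of_lt (hlt i hi)]
    rw [hrest, ih hne, union_comm, Icc_union_Icc_eq_Icc, add_comm (f a), add_assoc]
    · exact le_add_of_nonneg_right (sum_nonneg fun i _ ↦ hf i)
    · exact le_add_of_nonneg_right (hf a)

theorem biUnion_fiber_Icc_sumBelow {κ : Type*} [Fintype ι] [DecidableEq κ]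
    (he : Function.Injective e) (hf : ∀ i, 0 ≤ f i) (g : ι → κ) (c : κ → β) {p : κ}
    (hp : ∃ i, g i = p) :
    ⋃ i ∈ {i | g i = p}, Icc (c (g i) + sumBelow e f (univ.filter (g · = g i)) i)
        (c (g i) + sumBelow e f (univ.filter (g · = g i)) i + f i) =
      Icc (c p) (c p + ∑ i ∈ univ.filter (g · = p), f i) := by
  obtain ⟨i₀, hi₀⟩ := hp
  have hfiber : {i | g i = p} = ↑(univ.filter (g · = p)) := by ext; simp
  rw [hfiber, set_biUnion_coe, ← biUnion_Icc_sumBelow he hf ⟨i₀, by simp [hi₀]⟩ (c p)]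
  exact iUnion₂_congr fun i hi ↦ by rw [(mem_filter.1 hi).2]

end Packing

theorem sum_filter_lexLt_eq_sumBelow {d m : ℕ} {β : Type*} [AddCommMonoid β]
    (f : (Fin d → Fin m) → β) (k : Fin d) (i : Fin d → Fin m) :
    ∑ j ∈ Finset.univ.filter (fun j ↦ lexLt j i ∧ j k = i k), f j =
      sumBelow toLex f (Finset.univ.filter (· k = i k)) i := by
  rw [sumBelow, Finset.filter_filter]
  congr 2
  ext j
  simp only [lexLt_iff_toLex_lt, and_comm]
  -- the two sides differ only in the instance providing `<` on `Lex (Fin d → Fin m)`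
  rfl

section Partition

variable {X : Type*} [LinearOrder X] {x : ℕ → X} {m : ℕ}

theorem exists_fin_mem_Ioc_of_mem_Ioc {y : X} (hy : y ∈ Ioc (x 0) (x m)) :
    ∃ a : Fin m, y ∈ Ioc (x a) (x (a + 1)) := by
  have hcover := Ioc_subset_biUnion_Ioc m x hy
  simp only [mem_iUnion, Finset.mem_range, exists_prop] at hcover
  obtain ⟨a, ham, hya⟩ := hcover
  exact ⟨⟨a, ham⟩, hya⟩

theorem disjoint_Ioc_of_monotoneOn (hx : MonotoneOn x (Iic m)) {a b : Fin m} (hab : a ≠ b) :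
    Disjoint (Ioc (x a) (x (a + 1))) (Ioc (x b) (x (b + 1))) := by
  have key : ∀ {a b : Fin m}, a < b →
      Disjoint (Ioc (x a) (x (a + 1))) (Ioc (x b) (x (b + 1))) :=
    fun {a b} h ↦ Set.Ioc_disjoint_Ioc_of_le <|
      hx (mem_Iic.2 a.isLt) (mem_Iic.2 b.isLt.le) (Fin.lt_def.1 h)
  rcases hab.lt_or_gt with h | h
  · exact key h
  · exact (key h).symm

theorem Icc_subset_Icc_of_monotoneOn (hx : MonotoneOn x (Iic m)) (p : Fin m) :
    Icc (x p) (x (p + 1)) ⊆ Icc (x 0) (x m) :=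
  Icc_subset_Icc (hx (mem_Iic.2 (Nat.zero_le m)) (mem_Iic.2 p.isLt.le) (Nat.zero_le p))
    (hx (mem_Iic.2 p.isLt) (mem_Iic.2 le_rfl) p.isLt)

theorem iUnion_Icc_eq_Icc_of_monotoneOn (hx : MonotoneOn x (Iic m)) (hm : 0 < m) :
    ⋃ p : Fin m, Icc (x p) (x (p + 1)) = Icc (x 0) (x m) := by
  refine Subset.antisymm (iUnion_subset (Icc_subset_Icc_of_monotoneOn hx)) fun y hy ↦ ?_
  rcases hy.1.eq_or_lt with rfl | h
  · have h01 : x 0 ≤ x 1 := hx (mem_Iic.2 (Nat.zero_le m)) (mem_Iic.2 hm) zero_le_one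
    exact mem_iUnion.2 ⟨⟨0, hm⟩, left_mem_Icc.2 h01⟩
  · obtain ⟨a, hya⟩ := exists_fin_mem_Ioc_of_mem_Ioc ⟨h, hy.2⟩
    exact mem_iUnion.2 ⟨a, Ioc_subset_Icc_self hya⟩

end Partition

section Grid

variable {d m : ℕ} (x : Fin d → ℕ → ℝ)

theorem measurableSet_coord_mem_Ioc (l : Fin d) (a b : ℝ) :
    MeasurableSet {u : Fin d → ℝ | a < u l ∧ u l ≤ b} :=
  (measurableSet_lt measurable_const (measurable_pi_apply l)).inter
    (measurableSet_le (measurable_pi_apply l) measurable_const)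

theorem ae_forall_coord_mem_Ioc {μ : Measure (Fin d → ℝ)} [IsProbabilityMeasure μ]
    {a b : Fin d → ℝ} (h : ∀ l, μ {u | a l < u l ∧ u l ≤ b l} = 1) :
    ∀ᵐ u ∂μ, ∀ l, a l < u l ∧ u l ≤ b l :=
  Filter.eventually_all.2 fun l ↦
    (ae_iff_measure_eq (measurableSet_coord_mem_Ioc l _ _).nullMeasurableSet).2 <| by
      rw [h, measure_univ]

def gridBox (i : Fin d → Fin m) : Set (Fin d → ℝ) :=
  {u | ∀ l, x l (i l) < u l ∧ u l ≤ x l (i l + 1)}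

theorem measurableSet_gridBox (i : Fin d → Fin m) : MeasurableSet (gridBox x i) := by
  simp only [gridBox, ofPred_forall]
  exact .iInter fun l ↦ measurableSet_coord_mem_Ioc l _ _

theorem pairwise_disjoint_gridBox (hx : ∀ l, MonotoneOn (x l) (Iic m)) :
    Pairwise (Function.onFun Disjoint (gridBox x : (Fin d → Fin m) → Set (Fin d → ℝ))) := by
  intro i j hij
  obtain ⟨l, hl⟩ := Function.ne_iff.1 hij
  exact Set.disjoint_left.2 fun u hi hj ↦
    Set.disjoint_left.1 (disjoint_Ioc_of_monotoneOn (hx l) hl) (hi l) (hj l)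

theorem slab_inter_subset_biUnion_gridBox (k : Fin d) (p : Fin m) :
    {u : Fin d → ℝ | x k p < u k ∧ u k ≤ x k (p + 1)} ∩ {u | ∀ l, x l 0 < u l ∧ u l ≤ x l m} ⊆
      ⋃ i ∈ Finset.univ.filter (· k = p), gridBox x i := by
  rintro u ⟨hslab, hcube⟩
  choose a ha using fun l ↦ exists_fin_mem_Ioc_of_mem_Ioc (hcube l)
  refine mem_iUnion₂.2 ⟨Function.update a k p, by simp, fun l ↦ ?_⟩
  rcases eq_or_ne l k with rfl | hl
  · simpa using hslab
  · simpa [hl] using ha l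

theorem sum_measure_gridBox_slab (μ : Measure (Fin d → ℝ))
    (hx : ∀ l, MonotoneOn (x l) (Iic m)) (hcube : ∀ᵐ u ∂μ, ∀ l, x l 0 < u l ∧ u l ≤ x l m)
    (k : Fin d) (p : Fin m) :
    ∑ i ∈ Finset.univ.filter (· k = p), μ (gridBox x i) =
      μ {u : Fin d → ℝ | x k p < u k ∧ u k ≤ x k (p + 1)} := by
  rw [← measure_biUnion_finset ((pairwise_disjoint_gridBox x hx).set_pairwise _)
    fun i _ ↦ measurableSet_gridBox x i]
  refine le_antisymm (measure_mono <| iUnion₂_subset fun i hi u hu ↦ ?_) ?_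
  · simpa [(Finset.mem_filter.1 hi).2] using hu k
  · calc _ = μ ({u : Fin d → ℝ | x k p < u k ∧ u k ≤ x k (p + 1)} ∩
          {u | ∀ l, x l 0 < u l ∧ u l ≤ x l m}) :=
        (measure_inter_conull (ae_iff.1 hcube)).symm
      _ ≤ _ := measure_mono (slab_inter_subset_biUnion_gridBox x k p)

end Grid

def HasUniformMarginals {d : ℕ} (μ : Measure (Fin d → ℝ)) : Prop :=
  ∀ k : Fin d, ∀ s t : ℝ, 0 ≤ s → s ≤ t → t ≤ 1 →
    μ {u : Fin d → ℝ | s < u k ∧ u k ≤ t} = ENNReal.ofReal (t - s)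

namespace HasUniformMarginals

variable {d m : ℕ} {μ : Measure (Fin d → ℝ)} [IsProbabilityMeasure μ]

theorem ae_forall_mem_Ioc (hμ : HasUniformMarginals μ) :
    ∀ᵐ u ∂μ, ∀ l, 0 < u l ∧ u l ≤ 1 :=
  ae_forall_coord_mem_Ioc (a := fun _ ↦ 0) (b := fun _ ↦ 1) fun l ↦ by
    rw [hμ l 0 1 le_rfl zero_le_one le_rfl, sub_zero, ENNReal.ofReal_one]

theorem sum_toReal_measure_gridBox (hμ : HasUniformMarginals μ) {x : Fin d → ℕ → ℝ}
    (hx0 : ∀ l, x l 0 = 0) (hxm : ∀ l, x l m = 1) (hx : ∀ l, MonotoneOn (x l) (Iic m))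
    (k : Fin d) (p : Fin m) :
    ∑ i ∈ Finset.univ.filter (· k = p), (μ (gridBox x i)).toReal = x k (p + 1) - x k p := by
  have hle : x k p ≤ x k (p + 1) := hx k (mem_Iic.2 p.isLt.le) (mem_Iic.2 p.isLt) (Nat.le_succ _)
  have hsub := Icc_subset_Icc_of_monotoneOn (hx k) p
  rw [hx0, hxm] at hsub
  have hcube : ∀ᵐ u ∂μ, ∀ l, x l 0 < u l ∧ u l ≤ x l m := by
    simpa only [hx0, hxm] using hμ.ae_forall_mem_Ioc
  rw [← ENNReal.toReal_sum fun _ _ ↦ measure_ne_top _ _, sum_measure_gridBox_slab x μ hx hcube,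
    hμ k _ _ (hsub ⟨le_rfl, hle⟩).1 hle (hsub ⟨hle, le_rfl⟩).2,
    ENNReal.toReal_ofReal (sub_nonneg.2 hle)]

end HasUniformMarginals

theorem lex_packing_of_copula_masses_general (d m : ℕ)
    (μ : MeasureTheory.Measure (Fin d → ℝ)) [MeasureTheory.IsProbabilityMeasure μ]
    (x : Fin d → ℕ → ℝ)
    (hx0 : ∀ k : Fin d, x k 0 = 0) (hxm : ∀ k : Fin d, x k m = 1)
    (hxlt : ∀ k : Fin d, ∀ p < m, x k p < x k (p + 1))
    (hmarg : ∀ k : Fin d, ∀ s t : ℝ, 0 ≤ s → s ≤ t → t ≤ 1 →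
      μ {u : Fin d → ℝ | s < u k ∧ u k ≤ t} = ENNReal.ofReal (t - s))
    (μr : (Fin d → Fin m) → ℝ)
    (hμr : ∀ i : Fin d → Fin m,
      μr i = (μ {u : Fin d → ℝ | ∀ k, x k (i k : ℕ) < u k ∧ u k ≤ x k ((i k : ℕ) + 1)}).toReal)
    (q : Fin d → (Fin d → Fin m) → ℝ)
    (hq : ∀ (k : Fin d) (i : Fin d → Fin m),
      q k i = x k (i k : ℕ) +
        ∑ j ∈ Finset.univ.filter (fun j : Fin d → Fin m => lexLt j i ∧ j k = i k), μr j) :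
    ∀ (k : Fin d) (p : Fin m),
      (∀ i i' : Fin d → Fin m, i k = p → i' k = p → i ≠ i' →
        Set.Ioo (q k i) (q k i + μr i) ∩ Set.Ioo (q k i') (q k i' + μr i') = ∅) ∧
      (⋃ i ∈ {i : Fin d → Fin m | i k = p}, Set.Icc (q k i) (q k i + μr i)) =
        Set.Icc (x k (p : ℕ)) (x k ((p : ℕ) + 1)) ∧
      (⋃ i : Fin d → Fin m, Set.Icc (q k i) (q k i + μr i)) = Set.Icc (0:ℝ) 1 := by
  intro k p
  have hmono : ∀ l, MonotoneOn (x l) (Iic m) := fun l ↦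
    (strictMonoOn_Iic_of_lt_succ fun n hn ↦ hxlt l n hn).monotoneOn
  have hμr_box : ∀ i, μr i = (μ (gridBox x i)).toReal := hμr
  have hμr_nonneg : ∀ i, 0 ≤ μr i := fun i ↦ hμr_box i ▸ ENNReal.toReal_nonneg
  have hslab_sum : ∀ p : Fin m,
      ∑ i ∈ Finset.univ.filter (· k = p), μr i = x k (p + 1) - x k p := fun p ↦ by
    simpa only [← hμr_box] using
      HasUniformMarginals.sum_toReal_measure_gridBox hmarg hx0 hxm hmono k p
  have hq_sumBelow : ∀ i, q k i =
      x k (i k) + sumBelow toLex μr (Finset.univ.filter (· k = i k)) i := fun i ↦ by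
    rw [hq, sum_filter_lexLt_eq_sumBelow]
  have hslab_union : ∀ p : Fin m, ⋃ i ∈ {i : Fin d → Fin m | i k = p},
      Icc (q k i) (q k i + μr i) = Icc (x k p) (x k (p + 1)) := fun p ↦ by
    simp only [hq_sumBelow]
    rw [← add_sub_cancel (x k p) (x k (p + 1)), ← hslab_sum p]
    exact biUnion_fiber_Icc_sumBelow toLex.injective hμr_nonneg (· k) (fun p ↦ x k p)
      (p := p) ⟨fun _ ↦ p, rfl⟩
  refine ⟨fun i i' hi hi' hne ↦ ?_, hslab_union p, ?_⟩
  · rw [hq_sumBelow i, hq_sumBelow i', hi, hi', ← disjoint_iff_inter_eq_empty]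
    exact disjoint_Ioo_sumBelow toLex.injective hμr_nonneg (by simp [hi]) (by simp [hi']) hne _
  · have hfibers : ⋃ i, Icc (q k i) (q k i + μr i) =
        ⋃ p : Fin m, ⋃ i ∈ {i : Fin d → Fin m | i k = p}, Icc (q k i) (q k i + μr i) := by
      simp only [mem_ofPred_eq]
      rw [iUnion_comm]
      simp only [iUnion_iUnion_eq_right]
    rw [hfibers, iUnion_congr hslab_union, iUnion_Icc_eq_Icc_of_monotoneOn (hmono k) p.pos, hx0,
      hxm]

/-- packing the masses of the grid boxes of a copula measure
lexicographically produces, in each coordinate slab `[x_{p-1}^k, x_p^k]`, intervals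
`J_i^k = [q_i^k, q_i^k + μ_i]` with pairwise disjoint interiors whose union is the whole
slab; the union over all boxes is `[0,1]`. -/
theorem lex_packing_of_copula_masses (d m : ℕ) (hd : 0 < d) (hm : 0 < m)
    (μ : MeasureTheory.Measure (Fin d → ℝ)) [MeasureTheory.IsProbabilityMeasure μ]
    (x : Fin d → ℕ → ℝ)
    (hx0 : ∀ k : Fin d, x k 0 = 0) (hxm : ∀ k : Fin d, x k m = 1)
    (hxlt : ∀ k : Fin d, ∀ p < m, x k p < x k (p + 1))
    (hmarg : ∀ k : Fin d, ∀ s t : ℝ, 0 ≤ s → s ≤ t → t ≤ 1 →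
      μ {u : Fin d → ℝ | s < u k ∧ u k ≤ t} = ENNReal.ofReal (t - s))
    (μr : (Fin d → Fin m) → ℝ)
    (hμr : ∀ i : Fin d → Fin m,
      μr i = (μ {u : Fin d → ℝ | ∀ k, x k (i k : ℕ) < u k ∧ u k ≤ x k ((i k : ℕ) + 1)}).toReal)
    (q : Fin d → (Fin d → Fin m) → ℝ)
    (hq : ∀ (k : Fin d) (i : Fin d → Fin m),
      q k i = x k (i k : ℕ) +
        ∑ j ∈ Finset.univ.filter (fun j : Fin d → Fin m => lexLt j i ∧ j k = i k), μr j) :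
    ∀ (k : Fin d) (p : Fin m),
      (∀ i i' : Fin d → Fin m, i k = p → i' k = p → i ≠ i' →
        Set.Ioo (q k i) (q k i + μr i) ∩ Set.Ioo (q k i') (q k i' + μr i') = ∅) ∧
      (⋃ i ∈ {i : Fin d → Fin m | i k = p}, Set.Icc (q k i) (q k i + μr i)) =
        Set.Icc (x k (p : ℕ)) (x k ((p : ℕ) + 1)) ∧
      (⋃ i : Fin d → Fin m, Set.Icc (q k i) (q k i + μr i)) = Set.Icc (0:ℝ) 1 :=
  lex_packing_of_copula_masses_general d m μ x hx0 hxm hxlt hmarg μr hμr q hq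
end

section
/- Let V be an N × N real matrix all of whose entries satisfy: every row sum and every column sum equals μ > 0, and for every j, all partial sums Σ_{i=1}^s V(i,j) and Σ_{i=s}^N V(i,j) (s ∈ [N]) are nonnegative, and symmetrically for rows. Define Q on the grid {0, 1/N, ..., 1}^2 by Q(r/N, t/N) = (1/(Nμ)) Σ_{i≤r} Σ_{j≤t} V(i,j). Then Q is a discrete quasi-copula: Q(r/N, 1) = r/N, Q(1, t/N) = t/N, Q(0, ·) = Q(·, 0) = 0, Q is nondecreasing in each argument along the grid, and |Q(r/N, t/N) − Q(r'/N, t/N)| ≤ |r − r'|/N (and symmetrically), for all grid indices. -/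
/-!
Row by row, the nonnegative prefix and suffix sums squeeze every partial row sum of `V` into
`[0, μ]`. Adding rows `r + 1, …, r'` therefore raises the cumulative sum by between `0` and
`(r' - r) μ`, which after normalizing by `N μ` is monotonicity and the 1-Lipschitz bound in the
first variable; full rows sum to `μ`, which gives the margins. The second variable is the
same statement for the transpose of `V`.
-/

open Finset

lemma sum_Icc_one_sub_sum_Icc_one {M : Type*} [AddCommGroup M] (g : ℕ → M) {r r' : ℕ}
    (h : r ≤ r') :
    ∑ i ∈ Icc 1 r', g i - ∑ i ∈ Icc 1 r, g i = ∑ i ∈ Ioc r r', g i := by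
  have hIcc : ∀ n, Icc 1 n = Ioc 0 n := Icc_add_one_left_eq_Ioc 0
  rw [sub_eq_iff_eq_add', hIcc, hIcc, sum_Ioc_consecutive g (Nat.zero_le r) h]

lemma sum_Icc_one_nonneg {M : Type*} [AddCommMonoid M] [Preorder M] {f : ℕ → M} {N t : ℕ}
    (hpre : ∀ s ∈ Icc 1 N, 0 ≤ ∑ j ∈ Icc 1 s, f j) (ht : t ≤ N) :
    0 ≤ ∑ j ∈ Icc 1 t, f j := by
  rcases Nat.eq_zero_or_pos t with rfl | ht₀
  · simp
  · exact hpre t (mem_Icc.mpr ⟨ht₀, ht⟩)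

lemma sum_Icc_one_le_sum_Icc_one {M : Type*} [AddCommGroup M] [PartialOrder M]
    [IsOrderedAddMonoid M] {f : ℕ → M} {N t : ℕ}
    (hsuf : ∀ s ∈ Icc 1 N, 0 ≤ ∑ j ∈ Icc s N, f j) (ht : t ≤ N) :
    ∑ j ∈ Icc 1 t, f j ≤ ∑ j ∈ Icc 1 N, f j := by
  rw [← sub_nonneg, sum_Icc_one_sub_sum_Icc_one f ht, ← Icc_add_one_left_eq_Ioc]
  rcases ht.lt_or_eq with ht | rfl
  · exact hsuf (t + 1) (mem_Icc.mpr ⟨Nat.succ_pos t, ht⟩)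
  · simp

lemma abs_sub_le_mul_abs_sub_of_increments {F : ℕ → ℝ} {c : ℝ} {N : ℕ}
    (hinc : ∀ r r', r ≤ r' → r' ≤ N → 0 ≤ F r' - F r ∧ F r' - F r ≤ c * ((r' : ℝ) - r))
    {r r' : ℕ} (hr : r ≤ N) (hr' : r' ≤ N) :
    |F r - F r'| ≤ c * |(r : ℝ) - r'| := by
  rcases le_total r r' with h | h
  · have hcast : (r : ℝ) ≤ r' := by exact_mod_cast h
    rw [abs_sub_comm, abs_of_nonneg (hinc r r' h hr').1, abs_sub_comm,
      abs_of_nonneg (sub_nonneg.mpr hcast)]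
    exact (hinc r r' h hr').2
  · have hcast : (r' : ℝ) ≤ r := by exact_mod_cast h
    rw [abs_of_nonneg (hinc r' r h hr).1, abs_of_nonneg (sub_nonneg.mpr hcast)]
    exact (hinc r' r h hr).2

section Rows

variable {N : ℕ} {μ : ℝ} {V : ℕ → ℕ → ℝ}

lemma sum_Ioc_row_sums_mem_Icc
    (hrow : ∀ i ∈ Icc 1 N, ∑ j ∈ Icc 1 N, V i j = μ)
    (hrowpart : ∀ i ∈ Icc 1 N, ∀ s ∈ Icc 1 N,
      0 ≤ ∑ j ∈ Icc 1 s, V i j ∧ 0 ≤ ∑ j ∈ Icc s N, V i j)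
    {r r' t : ℕ} (hr' : r' ≤ N) (ht : t ≤ N) :
    0 ≤ ∑ i ∈ Ioc r r', ∑ j ∈ Icc 1 t, V i j ∧
      ∑ i ∈ Ioc r r', ∑ j ∈ Icc 1 t, V i j ≤ (r' - r : ℕ) * μ := by
  have hmem : ∀ i ∈ Ioc r r', i ∈ Icc 1 N := fun i hi => by
    rw [mem_Ioc] at hi
    exact mem_Icc.mpr ⟨by omega, by omega⟩
  constructor
  · exact sum_nonneg fun i hi =>
      sum_Icc_one_nonneg (fun s hs => (hrowpart i (hmem i hi) s hs).1) ht
  · calc ∑ i ∈ Ioc r r', ∑ j ∈ Icc 1 t, V i j ≤ ∑ _i ∈ Ioc r r', μ :=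
          sum_le_sum fun i hi => hrow i (hmem i hi) ▸
            sum_Icc_one_le_sum_Icc_one (fun s hs => (hrowpart i (hmem i hi) s hs).2) ht
      _ = (r' - r : ℕ) * μ := by rw [sum_const, Nat.card_Ioc, nsmul_eq_mul]

theorem quasiCopula_first_variable (hμ : 0 < μ) {Q : ℕ → ℕ → ℝ}
    (hrow : ∀ i ∈ Icc 1 N, ∑ j ∈ Icc 1 N, V i j = μ)
    (hrowpart : ∀ i ∈ Icc 1 N, ∀ s ∈ Icc 1 N,
      0 ≤ ∑ j ∈ Icc 1 s, V i j ∧ 0 ≤ ∑ j ∈ Icc s N, V i j)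
    (hQ : ∀ r t : ℕ, r ≤ N → t ≤ N →
      Q r t = (∑ i ∈ Icc 1 r, ∑ j ∈ Icc 1 t, V i j) / ((N : ℝ) * μ)) :
    (∀ r ≤ N, Q r N = (r : ℝ) / N) ∧
    (∀ t ≤ N, Q 0 t = 0) ∧
    (∀ r r' t : ℕ, r ≤ N → r' ≤ N → t ≤ N → r ≤ r' → Q r t ≤ Q r' t) ∧
    (∀ r r' t : ℕ, r ≤ N → r' ≤ N → t ≤ N →
      |Q r t - Q r' t| ≤ |(r : ℝ) - (r' : ℝ)| / N) := by
  have hinc : ∀ t ≤ N, ∀ r r', r ≤ r' → r' ≤ N →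
      0 ≤ Q r' t - Q r t ∧ Q r' t - Q r t ≤ (N : ℝ)⁻¹ * ((r' : ℝ) - r) := by
    intro t ht r r' hrr' hr'
    obtain ⟨hlo, hhi⟩ := sum_Ioc_row_sums_mem_Icc hrow hrowpart (r := r) hr' ht
    rw [hQ r' t hr' ht, hQ r t (hrr'.trans hr') ht, div_sub_div_same,
      sum_Icc_one_sub_sum_Icc_one _ hrr']
    have hNμ : (0 : ℝ) ≤ N * μ := by positivity
    refine ⟨div_nonneg hlo hNμ, ?_⟩
    calc (∑ i ∈ Ioc r r', ∑ j ∈ Icc 1 t, V i j) / (N * μ) ≤ (r' - r : ℕ) * μ / (N * μ) :=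
          div_le_div_of_nonneg_right hhi hNμ
      _ = (N : ℝ)⁻¹ * ((r' : ℝ) - r) := by
          rw [mul_div_mul_right _ _ hμ.ne', Nat.cast_sub hrr', inv_mul_eq_div]
  refine ⟨fun r hr => ?_, fun t ht => ?_, fun r r' t hr hr' ht hrr' => ?_,
    fun r r' t hr hr' ht => ?_⟩
  · have hfull : ∑ i ∈ Icc 1 r, ∑ j ∈ Icc 1 N, V i j = r * μ := by
      rw [sum_congr rfl fun i hi => hrow i (Icc_subset_Icc_right hr hi), sum_const,
        Nat.card_Icc, nsmul_eq_mul, Nat.add_sub_cancel]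
    rw [hQ r N hr le_rfl, hfull, mul_div_mul_right _ _ hμ.ne']
  · simp [hQ 0 t (Nat.zero_le N) ht]
  · exact sub_nonneg.mp (hinc t ht r r' hrr' hr').1
  · rw [div_eq_inv_mul]
    exact abs_sub_le_mul_abs_sub_of_increments (hinc t ht) hr hr'

end Rows

theorem mass_matrix_gives_discrete_quasi_copula_general (N : ℕ)
    (μ : ℝ) (hμ : 0 < μ) (V : ℕ → ℕ → ℝ) (Q : ℕ → ℕ → ℝ)
    (hrow : ∀ i ∈ Finset.Icc 1 N, ∑ j ∈ Finset.Icc 1 N, V i j = μ)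
    (hcol : ∀ j ∈ Finset.Icc 1 N, ∑ i ∈ Finset.Icc 1 N, V i j = μ)
    (hcolpart : ∀ j ∈ Finset.Icc 1 N, ∀ s ∈ Finset.Icc 1 N,
      0 ≤ ∑ i ∈ Finset.Icc 1 s, V i j ∧ 0 ≤ ∑ i ∈ Finset.Icc s N, V i j)
    (hrowpart : ∀ i ∈ Finset.Icc 1 N, ∀ s ∈ Finset.Icc 1 N,
      0 ≤ ∑ j ∈ Finset.Icc 1 s, V i j ∧ 0 ≤ ∑ j ∈ Finset.Icc s N, V i j)
    (hQ : ∀ r t : ℕ, r ≤ N → t ≤ N →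
      Q r t = (∑ i ∈ Finset.Icc 1 r, ∑ j ∈ Finset.Icc 1 t, V i j) / ((N : ℝ) * μ)) :
    (∀ r ≤ N, Q r N = (r : ℝ) / N) ∧
    (∀ t ≤ N, Q N t = (t : ℝ) / N) ∧
    (∀ t ≤ N, Q 0 t = 0) ∧
    (∀ r ≤ N, Q r 0 = 0) ∧
    (∀ r r' t : ℕ, r ≤ N → r' ≤ N → t ≤ N → r ≤ r' → Q r t ≤ Q r' t) ∧
    (∀ t t' r : ℕ, t ≤ N → t' ≤ N → r ≤ N → t ≤ t' → Q r t ≤ Q r t') ∧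
    (∀ r r' t : ℕ, r ≤ N → r' ≤ N → t ≤ N →
      |Q r t - Q r' t| ≤ |(r : ℝ) - (r' : ℝ)| / N) ∧
    (∀ t t' r : ℕ, t ≤ N → t' ≤ N → r ≤ N →
      |Q r t - Q r t'| ≤ |(t : ℝ) - (t' : ℝ)| / N) := by
  obtain ⟨hmargin, hzero, hmono, hlip⟩ := quasiCopula_first_variable hμ hrow hrowpart hQ
  have hQ_swap : ∀ r t : ℕ, r ≤ N → t ≤ N →
      Q t r = (∑ i ∈ Icc 1 r, ∑ j ∈ Icc 1 t, V j i) / ((N : ℝ) * μ) := fun r t hr ht => by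
    rw [hQ t r ht hr, sum_comm]
  obtain ⟨hmargin_swap, hzero_swap, hmono_swap, hlip_swap⟩ :=
    quasiCopula_first_variable (V := fun i j => V j i) (Q := fun r t => Q t r) hμ hcol hcolpart
      hQ_swap
  exact ⟨hmargin, hmargin_swap, hzero, hzero_swap, hmono, hmono_swap, hlip, hlip_swap⟩

/-- a doubly stochastic mass matrix (all row and column sums `μ > 0`)
whose partial sums from every boundary are nonnegative induces, via normalized
cumulative sums, a discrete quasi-copula on the grid `{0, 1/N, …, 1}²`. -/
theorem mass_matrix_gives_discrete_quasi_copula (N : ℕ) (hN : 0 < N)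
    (μ : ℝ) (hμ : 0 < μ) (V : ℕ → ℕ → ℝ) (Q : ℕ → ℕ → ℝ)
    (hrow : ∀ i ∈ Finset.Icc 1 N, ∑ j ∈ Finset.Icc 1 N, V i j = μ)
    (hcol : ∀ j ∈ Finset.Icc 1 N, ∑ i ∈ Finset.Icc 1 N, V i j = μ)
    (hcolpart : ∀ j ∈ Finset.Icc 1 N, ∀ s ∈ Finset.Icc 1 N,
      0 ≤ ∑ i ∈ Finset.Icc 1 s, V i j ∧ 0 ≤ ∑ i ∈ Finset.Icc s N, V i j)
    (hrowpart : ∀ i ∈ Finset.Icc 1 N, ∀ s ∈ Finset.Icc 1 N,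
      0 ≤ ∑ j ∈ Finset.Icc 1 s, V i j ∧ 0 ≤ ∑ j ∈ Finset.Icc s N, V i j)
    (hQ : ∀ r t : ℕ, r ≤ N → t ≤ N →
      Q r t = (∑ i ∈ Finset.Icc 1 r, ∑ j ∈ Finset.Icc 1 t, V i j) / ((N : ℝ) * μ)) :
    (∀ r ≤ N, Q r N = (r : ℝ) / N) ∧
    (∀ t ≤ N, Q N t = (t : ℝ) / N) ∧
    (∀ t ≤ N, Q 0 t = 0) ∧
    (∀ r ≤ N, Q r 0 = 0) ∧
    (∀ r r' t : ℕ, r ≤ N → r' ≤ N → t ≤ N → r ≤ r' → Q r t ≤ Q r' t) ∧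
    (∀ t t' r : ℕ, t ≤ N → t' ≤ N → r ≤ N → t ≤ t' → Q r t ≤ Q r t') ∧
    (∀ r r' t : ℕ, r ≤ N → r' ≤ N → t ≤ N →
      |Q r t - Q r' t| ≤ |(r : ℝ) - (r' : ℝ)| / N) ∧
    (∀ t t' r : ℕ, t ≤ N → t' ≤ N → r ≤ N →
      |Q r t - Q r t'| ≤ |(t : ℝ) - (t' : ℝ)| / N) :=
  mass_matrix_gives_discrete_quasi_copula_general N μ hμ V Q hrow hcol hcolpart hrowpart hQ
end
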